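/- arXiv:0908.0509 — 3 statements merged into one kernel-verified Lean document; each statement's English description precedes it below -/
import Mathlib

section
/- Over ℤ[c11,...,c33], with A1, A2 the generic multiplication matrices for O = {1, x1, x2} ⊆ T^2, the following trace syzygy holds: (c21 - c32)·ρ22 + c31·ρ23 + c22·ρ32 + ρ12 = 0, where ρpq is the (p,q)-entry of [A1,A2]. -/
open MvPolynomial

/-- `C3 i j` is the variable `c_{i+1, j+1}` of `ℤ[c11,…,c33]`. -/
noncomputable def C3 (i j : Fin 3) : MvPolynomial (Fin 3 × Fin 3) ℤ :=
  X (i, j)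

/-- Generic multiplication matrix for `x1` on `O = {1, x1, x2}`. -/
noncomputable def B1 : Matrix (Fin 3) (Fin 3) (MvPolynomial (Fin 3 × Fin 3) ℤ) :=
  !![0, C3 0 0, C3 0 1; 1, C3 1 0, C3 1 1; 0, C3 2 0, C3 2 1]

/-- Generic multiplication matrix for `x2` on `O = {1, x1, x2}`. -/
noncomputable def B2 : Matrix (Fin 3) (Fin 3) (MvPolynomial (Fin 3 × Fin 3) ℤ) :=
  !![0, C3 0 1, C3 0 2; 0, C3 1 1, C3 1 2; 1, C3 2 1, C3 2 2]

/-- `ρpq`, the `(p,q)`-entry of `[B1, B2]` (0-based indices). -/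
noncomputable def ρ (p q : Fin 3) : MvPolynomial (Fin 3 × Fin 3) ℤ :=
  (B1 * B2 - B2 * B1) p q

theorem trace_syzygy_21 :
    (C3 1 0 - C3 2 1) * ρ 1 1 + C3 2 0 * ρ 1 2 + C3 1 1 * ρ 2 1 + ρ 0 1 = 0 := by
  simp [ρ, B1, B2, C3, Matrix.mul_apply, Fin.sum_univ_three, Matrix.sub_apply]
  ring
end

section
/- Over ℤ[c11,...,c33], with A1, A2 the generic multiplication matrices for O = {1, x1, x2} ⊆ T^2, the following trace syzygy holds: (c22 - c33)·ρ22 + c32·ρ23 + c23·ρ32 + ρ13 = 0, where ρpq is the (p,q)-entry of [A1,A2]. -/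
open MvPolynomial

theorem trace_syzygy_12 :
    (C3 1 1 - C3 2 2) * ρ 1 1 + C3 2 1 * ρ 1 2 + C3 1 2 * ρ 2 1 + ρ 0 2 = 0 := by
  simp only [ρ, B1, B2, Matrix.sub_apply, Matrix.mul_apply, Fin.sum_univ_three]
  norm_num [Matrix.cons_val_zero, Matrix.cons_val_one, Matrix.head_cons,
    Matrix.cons_val_succ, Matrix.cons_val_fin_one, Matrix.cons_val_two, Matrix.tail_cons]
  ring
end

section
/- Over ℤ[c11,...,c33], with A1, A2 the generic multiplication matrices for O = {1, x1, x2} ⊆ T^2, the entries ρ33, ρ12, ρ13 of [A1,A2] all lie in the ideal generated by ρ22, ρ23, ρ32; consequently the ideal generated by all entries of [A1,A2] equals (ρ22, ρ23, ρ32). -/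
open MvPolynomial

lemma rho00 : ρ 0 0 = 0 := by
  simp [ρ, B1, B2, Matrix.mul_apply, Fin.sum_univ_three]

lemma rho10 : ρ 1 0 = 0 := by
  simp [ρ, B1, B2, Matrix.mul_apply, Fin.sum_univ_three]

lemma rho20 : ρ 2 0 = 0 := by
  simp [ρ, B1, B2, Matrix.mul_apply, Fin.sum_univ_three]

lemma rho22 : ρ 2 2 = -ρ 1 1 := by
  simp [ρ, B1, B2, Matrix.mul_apply, Fin.sum_univ_three]; ring

lemma rho01 : ρ 0 1 = -(C3 1 0 - C3 2 1) * ρ 1 1 - C3 2 0 * ρ 1 2 - C3 1 1 * ρ 2 1 := by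
  simp [ρ, B1, B2, C3, Matrix.mul_apply, Fin.sum_univ_three]; ring

lemma rho02 : ρ 0 2 = -(C3 1 1 - C3 2 2) * ρ 1 1 - C3 2 1 * ρ 1 2 - C3 1 2 * ρ 2 1 := by
  simp [ρ, B1, B2, C3, Matrix.mul_apply, Fin.sum_univ_three]; ring

theorem ideal_generated_by_three_rhos :
    ρ 2 2 ∈ Ideal.span ({ρ 1 1, ρ 1 2, ρ 2 1} : Set (MvPolynomial (Fin 3 × Fin 3) ℤ)) ∧
    ρ 0 1 ∈ Ideal.span ({ρ 1 1, ρ 1 2, ρ 2 1} : Set (MvPolynomial (Fin 3 × Fin 3) ℤ)) ∧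
    ρ 0 2 ∈ Ideal.span ({ρ 1 1, ρ 1 2, ρ 2 1} : Set (MvPolynomial (Fin 3 × Fin 3) ℤ)) ∧
    Ideal.span (Set.range fun pq : Fin 3 × Fin 3 => ρ pq.1 pq.2) =
      Ideal.span ({ρ 1 1, ρ 1 2, ρ 2 1} : Set (MvPolynomial (Fin 3 × Fin 3) ℤ)) := by
  have h1 : ρ 1 1 ∈ Ideal.span ({ρ 1 1, ρ 1 2, ρ 2 1} : Set (MvPolynomial (Fin 3 × Fin 3) ℤ)) :=
    Ideal.subset_span (by simp)
  have h2 : ρ 1 2 ∈ Ideal.span ({ρ 1 1, ρ 1 2, ρ 2 1} : Set (MvPolynomial (Fin 3 × Fin 3) ℤ)) :=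
    Ideal.subset_span (by simp)
  have h3 : ρ 2 1 ∈ Ideal.span ({ρ 1 1, ρ 1 2, ρ 2 1} : Set (MvPolynomial (Fin 3 × Fin 3) ℤ)) :=
    Ideal.subset_span (by simp)
  have m22 : ρ 2 2 ∈ Ideal.span ({ρ 1 1, ρ 1 2, ρ 2 1} : Set (MvPolynomial (Fin 3 × Fin 3) ℤ)) := by
    rw [rho22]; exact neg_mem h1
  have m01 : ρ 0 1 ∈ Ideal.span ({ρ 1 1, ρ 1 2, ρ 2 1} : Set (MvPolynomial (Fin 3 × Fin 3) ℤ)) := by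
    rw [rho01]
    exact sub_mem (sub_mem (Ideal.mul_mem_left _ _ h1) (Ideal.mul_mem_left _ _ h2))
      (Ideal.mul_mem_left _ _ h3)
  have m02 : ρ 0 2 ∈ Ideal.span ({ρ 1 1, ρ 1 2, ρ 2 1} : Set (MvPolynomial (Fin 3 × Fin 3) ℤ)) := by
    rw [rho02]
    exact sub_mem (sub_mem (Ideal.mul_mem_left _ _ h1) (Ideal.mul_mem_left _ _ h2))
      (Ideal.mul_mem_left _ _ h3)
  refine ⟨m22, m01, m02, le_antisymm ?_ ?_⟩
  · rw [Ideal.span_le]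
    rintro _ ⟨⟨p, q⟩, rfl⟩
    fin_cases p <;> fin_cases q
    · show ρ 0 0 ∈ _; rw [rho00]; exact zero_mem _
    · exact m01
    · exact m02
    · show ρ 1 0 ∈ _; rw [rho10]; exact zero_mem _
    · exact h1
    · exact h2
    · show ρ 2 0 ∈ _; rw [rho20]; exact zero_mem _
    · exact h3
    · exact m22
  · rw [Ideal.span_le]
    rintro x hx
    rcases hx with rfl | rfl | rfl
    · exact Ideal.subset_span ⟨(1, 1), rfl⟩
    · exact Ideal.subset_span ⟨(1, 2), rfl⟩
    · exact Ideal.subset_span ⟨(2, 1), rfl⟩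
end
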